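/- Redundant store-store elimination is semantics-preserving: in a straight-line program over a store and a memory (Addr → ℤ), if two stores to the same address occur with no load from that address and no store to that address in between, then deleting the first store yields a program with the same final memory and store for every initial state. -/

import Mathlib

inductive Expr (Var : Type) where
  | var : Var → Expr Var
  | const : ℤ → Expr Var
  | add : Expr Var → Expr Var → Expr Var
  | sub : Expr Var → Expr Var → Expr Var
  | mul : Expr Var → Expr Var → Expr Var

def Expr.eval {Var : Type} (σ : Var → ℤ) : Expr Var → ℤ
  | .var x => σ x
  | .const n => n
  | .add a b => a.eval σ + b.eval σ
  | .sub a b => a.eval σ - b.eval σ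
  | .mul a b => a.eval σ * b.eval σ

/-- Statements: assignments, stores to memory, loads from memory. -/
inductive Stmt (Var Addr : Type) where
  | assign : Var → Expr Var → Stmt Var Addr
  | store : Addr → Expr Var → Stmt Var Addr
  | load : Var → Addr → Stmt Var Addr

/-- Sequential execution on a state `(store, memory) : (Var → ℤ) × (Addr → ℤ)`. -/
def run {Var Addr : Type} [DecidableEq Var] [DecidableEq Addr] :
    List (Stmt Var Addr) → (Var → ℤ) × (Addr → ℤ) → (Var → ℤ) × (Addr → ℤ)
  | [], s => s
  | .assign v e :: p, (σ, μ) => run p (Function.update σ v (e.eval σ), μ)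
  | .store a e :: p, (σ, μ) => run p (σ, Function.update μ a (e.eval σ))
  | .load v a :: p, (σ, μ) => run p (Function.update σ v (μ a), μ)

/-! A program that neither loads from nor stores to `a` commutes with overwriting `a`: running it
after `μ a := x` is running it first and then setting `a` to `x`. So the first store's value is
carried unchanged through `mid` and is then overwritten by the second store. -/

section

variable {Var Addr : Type} [DecidableEq Var] [DecidableEq Addr]

lemma run_append (p q : List (Stmt Var Addr)) (st : (Var → ℤ) × (Addr → ℤ)) :
    run (p ++ q) st = run q (run p st) := by
  induction p generalizing st with
  | nil => rfl
  | cons s p ih =>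
    obtain ⟨σ, μ⟩ := st
    cases s <;> simp [run, ih]

lemma run_update_memory_of_avoids (mid : List (Stmt Var Addr)) (a : Addr)
    (hmid : ∀ s ∈ mid, (∀ v : Var, s ≠ .load v a) ∧ (∀ e : Expr Var, s ≠ .store a e))
    (σ : Var → ℤ) (μ : Addr → ℤ) (x : ℤ) :
    run mid (σ, Function.update μ a x)
      = ((run mid (σ, μ)).1, Function.update (run mid (σ, μ)).2 a x) := by
  induction mid generalizing σ μ with
  | nil => rfl
  | cons s mid ih =>
    obtain ⟨hload, hstore⟩ := hmid s List.mem_cons_self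
    replace ih := ih fun t ht => hmid t (List.mem_cons_of_mem _ ht)
    cases s with
    | assign v e => exact ih _ _
    | store b e =>
      have hb : b ≠ a := by rintro rfl; exact hstore e rfl
      simp only [run]
      rw [Function.update_comm (Ne.symm hb), ih]
    | load v b =>
      have hb : b ≠ a := by rintro rfl; exact hload v rfl
      simp only [run, Function.update_of_ne hb]
      exact ih _ _

lemma run_store_cons_append_store (mid : List (Stmt Var Addr)) (a : Addr) (e₁ e₂ : Expr Var)
    (hmid : ∀ s ∈ mid, (∀ v : Var, s ≠ .load v a) ∧ (∀ e : Expr Var, s ≠ .store a e))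
    (st : (Var → ℤ) × (Addr → ℤ)) :
    run (.store a e₁ :: mid ++ [.store a e₂]) st = run (mid ++ [.store a e₂]) st := by
  obtain ⟨σ, μ⟩ := st
  simp only [List.cons_append, run, run_append, run_update_memory_of_avoids mid a hmid,
    Function.update_idem]

end

/-- Store-store elimination is semantics-preserving: if two stores to the same
address `a` occur with no load from `a` and no store to `a` in between, then
deleting the first store yields a program with the same final state for every
initial state. -/
theorem storeStoreElim_preserves_semantics {Var Addr : Type}
    [DecidableEq Var] [DecidableEq Addr]
    (p₁ mid p₃ : List (Stmt Var Addr)) (a : Addr) (e₁ e₂ : Expr Var)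
    (hmid : ∀ s ∈ mid, (∀ v : Var, s ≠ .load v a) ∧ (∀ e : Expr Var, s ≠ .store a e)) :
    ∀ st : (Var → ℤ) × (Addr → ℤ),
      run (p₁ ++ [.store a e₁] ++ mid ++ [.store a e₂] ++ p₃) st
        = run (p₁ ++ mid ++ [.store a e₂] ++ p₃) st := by
  intro st
  have hsplit : p₁ ++ [.store a e₁] ++ mid ++ [.store a e₂] ++ p₃
      = p₁ ++ (.store a e₁ :: mid ++ [.store a e₂]) ++ p₃ := by simp
  rw [hsplit, List.append_assoc p₁ mid, run_append, run_append (p₁ ++ _), run_append p₁,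
    run_store_cons_append_store mid a e₁ e₂ hmid, ← run_append p₁, ← run_append]
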